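/- arXiv:2605.10072 — 2 statements merged into one kernel-verified Lean document; each statement's English description precedes it below -/
import Mathlib

section
/- Let W ∈ 𝓜 be a branch word. For a word X ∈ 𝓜 set U°(X) = C°(g_S^X, g_T^X, v_SK^X, v_TK^X) and set U(W) = U°(W) ∪ C(g_S^W, g_T^W). Then U(W) is the disjoint union of the four sets C(g_K^W, g_S^W, g_T^W), U°(WS), U°(WT), and C°(g_K^W, v_SK^W + v_TK^W); that is, these four sets are pairwise disjoint and their union equals U(W). -/
namespace Markov

/-- The ambient space ℝ³. -/
abbrev V3 : Type := Fin 3 → ℝ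

/-- Standard basis vectors ẽ₁, ẽ₂, ẽ₃ (indexed by `Fin 3`). -/
noncomputable def e (i : Fin 3) : V3 := Pi.single i 1

/-- The two generating letters of the free monoid 𝓜. -/
inductive Lt
  | S
  | T
  deriving DecidableEq

/-- Elements of the free monoid 𝓜 on `{S, T}`, as words (lists of letters
read left to right); the monoid operation is `++` and the identity is `[]`. -/
abbrev Word := List Lt

/-- A word is a trunk word iff it consists only of the letter `S`
(otherwise it is a branch word). -/
def IsTrunk (X : Word) : Prop := ∀ l ∈ X, l = Lt.S

/-- Boolean trunk test. -/
def trunkB (X : Word) : Bool := X.all (fun l => decide (l = Lt.S))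

/-- One mutation step for the triple `(g_K, g_S, g_T)`; the flag `trunk`
records whether the word being extended (on the right) is a trunk word. -/
noncomputable def gStep (trunk : Bool) (l : Lt) (v : V3 × V3 × V3) :
    V3 × V3 × V3 :=
  match l with
  | Lt.S => (2 • v.1 - v.2.1, v.1, v.2.2)
  | Lt.T =>
    if trunk then (2 • v.2.1 - v.2.2, v.2.1, v.1)
    else (2 • v.1 - v.2.2, v.1, v.2.1)

/-- Auxiliary recursion computing the g-vectors from the reversed word
(head of the list = last letter of the word). -/
noncomputable def gRev (k s t : Fin 3) : Word → V3 × V3 × V3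
  | [] => (2 • e s - e k, e s, e t)
  | l :: X => gStep (trunkB X) l (gRev k s t X)

/-- The triple of modified g-vectors `(g_K^X, g_S^X, g_T^X)` for the
permutation `(k₀, s₀, t₀) = (k, s, t)` of the indices. -/
noncomputable def g (k s t : Fin 3) (X : Word) : V3 × V3 × V3 :=
  gRev k s t X.reverse

/-- One mutation step for the triple `(c_K, c_S, c_T)`. -/
noncomputable def cStep (trunk : Bool) (l : Lt) (v : V3 × V3 × V3) :
    V3 × V3 × V3 :=
  match l with
  | Lt.S => (-v.2.1, v.1 + 2 • v.2.1, v.2.2)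
  | Lt.T =>
    if trunk then (-v.2.2, v.2.1 + 2 • v.2.2, v.1)
    else (-v.2.2, v.1 + 2 • v.2.2, v.2.1)

noncomputable def cRev (k s t : Fin 3) : Word → V3 × V3 × V3
  | [] => (-(e k), e s + 2 • e k, e t)
  | l :: X => cStep (trunkB X) l (cRev k s t X)

/-- The triple of modified c-vectors `(c_K^X, c_S^X, c_T^X)`. -/
noncomputable def c (k s t : Fin 3) (X : Word) : V3 × V3 × V3 :=
  cRev k s t X.reverse

/-- `g_F^X = g_S^X + g_T^X − g_K^X`. -/
noncomputable def gF (k s t : Fin 3) (X : Word) : V3 :=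
  (g k s t X).2.1 + (g k s t X).2.2 - (g k s t X).1

/-- `v_SK^X = g_K^X − g_S^X`. -/
noncomputable def vSK (k s t : Fin 3) (X : Word) : V3 :=
  (g k s t X).1 - (g k s t X).2.1

/-- `v_TK^X = g_K^X − g_T^X`. -/
noncomputable def vTK (k s t : Fin 3) (X : Word) : V3 :=
  (g k s t X).1 - (g k s t X).2.2

/-- `c_F^X = c_K^X + c_S^X + c_T^X`. -/
noncomputable def cF (k s t : Fin 3) (X : Word) : V3 :=
  (c k s t X).1 + (c k s t X).2.1 + (c k s t X).2.2

/-- `x_SK^X = c_K^X + c_S^X`. -/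
noncomputable def xSK (k s t : Fin 3) (X : Word) : V3 :=
  (c k s t X).1 + (c k s t X).2.1

/-- `x_TK^X = −(c_K^X + c_T^X)`. -/
noncomputable def xTK (k s t : Fin 3) (X : Word) : V3 :=
  -((c k s t X).1 + (c k s t X).2.2)

/-- Closed cone spanned by two vectors. -/
def C2 (v1 v2 : V3) : Set V3 :=
  {x | ∃ la lb : ℝ, 0 ≤ la ∧ 0 ≤ lb ∧ x = la • v1 + lb • v2}

/-- Relatively open cone spanned by two vectors. -/
def C2o (v1 v2 : V3) : Set V3 :=
  {x | ∃ la lb : ℝ, 0 < la ∧ 0 < lb ∧ x = la • v1 + lb • v2}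

/-- Closed cone spanned by three vectors. -/
def C3 (v1 v2 v3 : V3) : Set V3 :=
  {x | ∃ la lb lc : ℝ, 0 ≤ la ∧ 0 ≤ lb ∧ 0 ≤ lc ∧ x = la • v1 + lb • v2 + lc • v3}

/-- Relatively open cone spanned by four vectors. -/
def C4o (v1 v2 v3 v4 : V3) : Set V3 :=
  {x | ∃ la lb lc ld : ℝ, 0 < la ∧ 0 < lb ∧ 0 < lc ∧ 0 < ld ∧
    x = la • v1 + lb • v2 + lc • v3 + ld • v4}

/-- The set `U_∘^X = C°(g_S^X, g_T^X, v_SK^X, v_TK^X)`. -/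
noncomputable def Uo (k s t : Fin 3) (X : Word) : Set V3 :=
  C4o (g k s t X).2.1 (g k s t X).2.2 (vSK k s t X) (vTK k s t X)

/-- The set `U^W = U_∘^W ∪ C(g_S^W, g_T^W)`. -/
noncomputable def Uset (k s t : Fin 3) (W : Word) : Set V3 :=
  Uo k s t W ∪ C2 (g k s t W).2.1 (g k s t W).2.2

/-- Recursion step for the Calkin–Wilf-type coefficients `q`. -/
def qstep (l : Lt) (p : ℤ × ℤ) : ℤ × ℤ :=
  match l with
  | Lt.S => (p.1 + p.2, p.2)
  | Lt.T => (p.2, p.1 + p.2)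

/-- `qfun init X` : the pair obtained from `init` by the recursion
`q^{SX} = (a+b, b)`, `q^{TX} = (b, a+b)` (letters prepended). -/
def qfun (init : ℤ × ℤ) : Word → ℤ × ℤ
  | [] => init
  | l :: X => qstep l (qfun init X)

/-- Recursion step for the coefficients `p`. -/
def pstep (l : Lt) (p : ℤ × ℤ) : ℤ × ℤ :=
  match l with
  | Lt.S => (p.1 + p.2, p.2)
  | Lt.T => (-p.2, -p.1 - p.2)

/-- `pfun init X` : the pair obtained from `init` by the recursion
`p^{SX} = (a+b, b)`, `p^{TX} = (−b, −a−b)` (letters prepended). -/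
def pfun (init : ℤ × ℤ) : Word → ℤ × ℤ
  | [] => init
  | l :: X => pstep l (pfun init X)

/-- The three index data `σ₁ = (1,3,2)`, `σ₂ = (2,1,3)`, `σ₃ = (3,2,1)`
(written with indices `0,1,2` instead of `1,2,3`). -/
def sig : Fin 3 → Fin 3 × Fin 3 × Fin 3 :=
  ![(0, 2, 1), (1, 0, 2), (2, 1, 0)]

/-- Modified g-vectors for the `i`-th subtree of the Markov quiver. -/
noncomputable def gM (i : Fin 3) (X : Word) : V3 × V3 × V3 :=
  g (sig i).1 (sig i).2.1 (sig i).2.2 X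

/-- `𝔤ᵢ = ẽ_{s₀(i)} + ẽ_{t₀(i)} − ẽ_{k₀(i)}`. -/
noncomputable def giFrak (i : Fin 3) : V3 :=
  e (sig i).2.1 + e (sig i).2.2 - e (sig i).1

/-- The set `𝔊ᵢ` of modified g-vectors in the `i`-th subtree. -/
noncomputable def Gset (i : Fin 3) : Set V3 :=
  {v | ∃ a b : ℤ, 1 ≤ a ∧ 1 ≤ b ∧ Int.gcd a b = 1 ∧
      v = giFrak i + (a : ℝ) • (e (sig i).1 - e (sig i).2.2) +
        (b : ℝ) • (e (sig i).2.1 - e (sig i).1)} ∪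
    {e (sig i).2.1}

/-- The support `𝒮` of the G-fan of the Markov quiver. -/
noncomputable def Supp : Set V3 :=
  C3 (e 0) (e 1) (e 2) ∪
    ⋃ (i : Fin 3), ⋃ (X : Word), C3 (gM i X).1 (gM i X).2.1 (gM i X).2.2

/-- The half space `V = {x : x₁+x₂+x₃ > 0} ∪ {0}`. -/
def Vhalf : Set V3 := {x | 0 < x 0 + x 1 + x 2} ∪ {0}


private lemma mid {p q r s : ℝ} (h1 : p < r) (h2 : p < s) (h3 : q < r) (h4 : q < s) :
    ∃ u : ℝ, p < u ∧ q < u ∧ u < r ∧ u < s := by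
  have hm : max p q < min r s := max_lt (lt_min h1 h2) (lt_min h3 h4)
  have hp := le_max_left p q
  have hq := le_max_right p q
  have hr := min_le_left r s
  have hs := min_le_right r s
  exact ⟨(max p q + min r s) / 2, by linarith, by linarith, by linarith, by linarith⟩

private lemma gRev_indep (k s t : Fin 3) (hks : k ≠ s) (hkt : k ≠ t) (hst : s ≠ t) :
    ∀ (X : Word) (a b c : ℝ),
      a • (gRev k s t X).1 + b • (gRev k s t X).2.1 + c • (gRev k s t X).2.2 = 0 →
      a = 0 ∧ b = 0 ∧ c = 0 := by
  intro X
  induction X with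
  | nil =>
    intro a b c hE
    have hk := congrFun hE k
    have hs' := congrFun hE s
    have ht := congrFun hE t
    simp [gRev, e, Pi.single_apply, hks, hkt, hst,
      Ne.symm hks, Ne.symm hkt, Ne.symm hst] at hk hs' ht
    refine ⟨?_, ?_, ?_⟩ <;> linarith
  | cons l X ih =>
    intro a b c hE
    cases l with
    | S =>
      have h0 : a • (2 • (gRev k s t X).1 - (gRev k s t X).2.1) + b • (gRev k s t X).1
          + c • (gRev k s t X).2.2 = 0 := hE
      have hE' : (2*a+b) • (gRev k s t X).1 + (-a) • (gRev k s t X).2.1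
          + c • (gRev k s t X).2.2 = 0 := by
        linear_combination (norm := module) h0
      obtain ⟨h1, h2, h3⟩ := ih (2*a+b) (-a) c hE'
      exact ⟨by linarith, by linarith, h3⟩
    | T =>
      rcases Bool.eq_false_or_eq_true (trunkB X) with htr | htr
      · rw [show gRev k s t (Lt.T :: X) = gStep (trunkB X) Lt.T (gRev k s t X) from rfl,
          htr] at hE
        have h0 : a • (2 • (gRev k s t X).2.1 - (gRev k s t X).2.2) + b • (gRev k s t X).2.1
            + c • (gRev k s t X).1 = 0 := hE
        have hE' : c • (gRev k s t X).1 + (2*a+b) • (gRev k s t X).2.1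
            + (-a) • (gRev k s t X).2.2 = 0 := by
          linear_combination (norm := module) h0
        obtain ⟨h1, h2, h3⟩ := ih c (2*a+b) (-a) hE'
        exact ⟨by linarith, by linarith, h1⟩
      · rw [show gRev k s t (Lt.T :: X) = gStep (trunkB X) Lt.T (gRev k s t X) from rfl,
          htr] at hE
        have h0 : a • (2 • (gRev k s t X).1 - (gRev k s t X).2.2) + b • (gRev k s t X).1
            + c • (gRev k s t X).2.1 = 0 := hE
        have hE' : (2*a+b) • (gRev k s t X).1 + c • (gRev k s t X).2.1
            + (-a) • (gRev k s t X).2.2 = 0 := by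
          linear_combination (norm := module) h0
        obtain ⟨h1, h2, h3⟩ := ih (2*a+b) c (-a) hE'
        exact ⟨by linarith, by linarith, h2⟩

private lemma trunkB_reverse_false {W : Word} (hW : ¬ IsTrunk W) :
    trunkB W.reverse = false := by
  rw [Bool.eq_false_iff]
  intro h
  apply hW
  intro l hl
  have := List.all_eq_true.mp h l (List.mem_reverse.mpr hl)
  simpa using this

private lemma g_appS (k s t : Fin 3) (W : Word) :
    g k s t (W ++ [Lt.S]) =
      (2 • (g k s t W).1 - (g k s t W).2.1, (g k s t W).1, (g k s t W).2.2) := by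
  show gRev k s t (W ++ [Lt.S]).reverse = _
  rw [List.reverse_append]
  rfl

private lemma g_appT (k s t : Fin 3) (W : Word) (h : trunkB W.reverse = false) :
    g k s t (W ++ [Lt.T]) =
      (2 • (g k s t W).1 - (g k s t W).2.2, (g k s t W).1, (g k s t W).2.1) := by
  show gRev k s t (W ++ [Lt.T]).reverse = _
  rw [List.reverse_append]
  show gStep (trunkB W.reverse) Lt.T (gRev k s t W.reverse) = _
  rw [h]
  rfl

private lemma key (K S T : V3)
    (h : ∀ a b c : ℝ, a • K + b • S + c • T = 0 → a = 0 ∧ b = 0 ∧ c = 0) :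
    C3 K S T ∩ C4o K T (K - S) (K + K - S - T) = ∅ ∧
    C3 K S T ∩ C4o K S (K - T) (K + K - S - T) = ∅ ∧
    C3 K S T ∩ C2o K (K - S + (K - T)) = ∅ ∧
    C4o K T (K - S) (K + K - S - T) ∩ C4o K S (K - T) (K + K - S - T) = ∅ ∧
    C4o K T (K - S) (K + K - S - T) ∩ C2o K (K - S + (K - T)) = ∅ ∧
    C4o K S (K - T) (K + K - S - T) ∩ C2o K (K - S + (K - T)) = ∅ ∧
    C3 K S T ∪ C4o K T (K - S) (K + K - S - T) ∪ C4o K S (K - T) (K + K - S - T) ∪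
      C2o K (K - S + (K - T)) = C4o S T (K - S) (K - T) ∪ C2 S T := by
  refine ⟨?_, ?_, ?_, ?_, ?_, ?_, ?_⟩
  · rw [Set.eq_empty_iff_forall_notMem]
    rintro x ⟨⟨a, b, c, ha, hb, hc, hx⟩, ⟨l1, l2, l3, l4, p1, p2, p3, p4, hy⟩⟩
    obtain ⟨-, hS0, -⟩ := h (a - l1 - l3 - 2*l4) (b + l3 + l4) (c - l2 + l4)
      (by linear_combination (norm := module) hy - hx)
    linarith
  · rw [Set.eq_empty_iff_forall_notMem]
    rintro x ⟨⟨a, b, c, ha, hb, hc, hx⟩, ⟨l1, l2, l3, l4, p1, p2, p3, p4, hy⟩⟩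
    obtain ⟨-, -, hT0⟩ := h (a - l1 - l3 - 2*l4) (b - l2 + l4) (c + l3 + l4)
      (by linear_combination (norm := module) hy - hx)
    linarith
  · rw [Set.eq_empty_iff_forall_notMem]
    rintro x ⟨⟨a, b, c, ha, hb, hc, hx⟩, ⟨l1, l2, p1, p2, hy⟩⟩
    obtain ⟨-, hS0, -⟩ := h (a - l1 - 2*l2) (b + l2) (c + l2)
      (by linear_combination (norm := module) hy - hx)
    linarith
  · rw [Set.eq_empty_iff_forall_notMem]
    rintro x ⟨⟨l1, l2, l3, l4, p1, p2, p3, p4, hx⟩, ⟨m1, m2, m3, m4, q1, q2, q3, q4, hy⟩⟩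
    obtain ⟨-, h2, h3⟩ := h (l1 + l3 + 2*l4 - m1 - m3 - 2*m4) (-l3 - l4 - m2 + m4)
      (l2 - l4 + m3 + m4) (by linear_combination (norm := module) hy - hx)
    linarith
  · rw [Set.eq_empty_iff_forall_notMem]
    rintro x ⟨⟨l1, l2, l3, l4, p1, p2, p3, p4, hx⟩, ⟨m1, m2, q1, q2, hy⟩⟩
    obtain ⟨-, h2, h3⟩ := h (l1 + l3 + 2*l4 - m1 - 2*m2) (-l3 - l4 + m2) (l2 - l4 + m2)
      (by linear_combination (norm := module) hy - hx)
    linarith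
  · rw [Set.eq_empty_iff_forall_notMem]
    rintro x ⟨⟨l1, l2, l3, l4, p1, p2, p3, p4, hx⟩, ⟨m1, m2, q1, q2, hy⟩⟩
    obtain ⟨-, h2, h3⟩ := h (l1 + l3 + 2*l4 - m1 - 2*m2) (l2 - l4 + m2) (-l3 - l4 + m2)
      (by linear_combination (norm := module) hy - hx)
    linarith
  · ext x
    simp only [Set.mem_union]
    constructor
    · rintro (((⟨a, b, c, ha, hb, hc, hx⟩ | ⟨l1, l2, l3, l4, p1, p2, p3, p4, hx⟩) |
        ⟨l1, l2, l3, l4, p1, p2, p3, p4, hx⟩) | ⟨l1, l2, p1, p2, hx⟩)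
      · rcases eq_or_lt_of_le ha with ha0 | ha0
        · exact Or.inr ⟨b, c, hb, hc, by rw [hx, ← ha0]; module⟩
        · exact Or.inl ⟨b + a/2, c + a/2, a/2, a/2, by linarith, by linarith, by linarith,
            by linarith, by linear_combination (norm := module) hx⟩
      · obtain ⟨u, hu1, hu2, hu3, hu4⟩ := mid (p := 0) (q := l4 - l2) (r := l1 + l3 + 2*l4)
          (s := l1 + l4) (by linarith) (by linarith) (by linarith) (by linarith)
        exact Or.inl ⟨l1 + l4 - u, l2 - l4 + u, l1 + l3 + 2*l4 - u, u, by linarith,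
          by linarith, by linarith, by linarith, by linear_combination (norm := module) hx⟩
      · obtain ⟨u, hu1, hu2, hu3, hu4⟩ := mid (p := 0) (q := l3 + l4) (r := l1 + l3 + 2*l4)
          (s := l1 + l2 + l3 + l4) (by linarith) (by linarith) (by linarith) (by linarith)
        exact Or.inl ⟨l1 + l2 + l3 + l4 - u, u - l3 - l4, l1 + l3 + 2*l4 - u, u, by linarith,
          by linarith, by linarith, by linarith, by linear_combination (norm := module) hx⟩
      · exact Or.inl ⟨l1/2, l1/2, l1/2 + l2, l1/2 + l2, by linarith, by linarith, by linarith,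
          by linarith, by linear_combination (norm := module) hx⟩
    · rintro (⟨m1, m2, m3, m4, q1, q2, q3, q4, hx⟩ | ⟨b, c, hb, hc, hx⟩)
      · rcases le_or_gt 0 (m1 - m3) with hβ | hβ
        · rcases le_or_gt 0 (m2 - m4) with hγ | hγ
          · exact Or.inl (Or.inl (Or.inl ⟨m3 + m4, m1 - m3, m2 - m4, by linarith, hβ, hγ,
              by linear_combination (norm := module) hx⟩))
          · obtain ⟨u, hu1, hu2, hu3, hu4⟩ := mid (p := 0) (q := m3 - m1) (r := m4 - m2)
              (s := m2 + m3) (by linarith) (by linarith) (by linarith) (by linarith)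
            exact Or.inl (Or.inr ⟨m2 + m3 - u, m1 - m3 + u, m4 - m2 - u, u, by linarith,
              by linarith, by linarith, by linarith,
              by linear_combination (norm := module) hx⟩)
        · rcases lt_trichotomy (m1 - m3) (m2 - m4) with hlt | heq | hgt
          · obtain ⟨u, hu1, hu2, hu3, hu4⟩ := mid (p := 0) (q := m4 - m2) (r := m3 - m1)
              (s := m1 + m4) (by linarith) (by linarith) (by linarith) (by linarith)
            exact Or.inl (Or.inl (Or.inr ⟨m1 + m4 - u, m2 - m4 + u, m3 - m1 - u, u,
              by linarith, by linarith, by linarith, by linarith,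
              by linear_combination (norm := module) hx⟩))
          · have hm4 : m4 = m2 - m1 + m3 := by linarith
            rw [hm4] at hx
            exact Or.inr ⟨m1 + m2, m3 - m1, by linarith, by linarith,
              by linear_combination (norm := module) hx⟩
          · obtain ⟨u, hu1, hu2, hu3, hu4⟩ := mid (p := 0) (q := m3 - m1) (r := m4 - m2)
              (s := m2 + m3) (by linarith) (by linarith) (by linarith) (by linarith)
            exact Or.inl (Or.inr ⟨m2 + m3 - u, m1 - m3 + u, m4 - m2 - u, u, by linarith,
              by linarith, by linarith, by linarith,
              by linear_combination (norm := module) hx⟩)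
      · exact Or.inl (Or.inl (Or.inl ⟨0, b, c, le_refl 0, hb, hc,
          by linear_combination (norm := module) hx⟩))

/-- direct sum decomposition of the upper bound `U^W`. -/
theorem stmt_17 (k s t : Fin 3) (hks : k ≠ s) (hkt : k ≠ t) (hst : s ≠ t)
    (W : Word) (hW : ¬ IsTrunk W) :
    C3 (g k s t W).1 (g k s t W).2.1 (g k s t W).2.2 ∩
      Uo k s t (W ++ [Lt.S]) = ∅ ∧
    C3 (g k s t W).1 (g k s t W).2.1 (g k s t W).2.2 ∩
      Uo k s t (W ++ [Lt.T]) = ∅ ∧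
    C3 (g k s t W).1 (g k s t W).2.1 (g k s t W).2.2 ∩
      C2o (g k s t W).1 (vSK k s t W + vTK k s t W) = ∅ ∧
    Uo k s t (W ++ [Lt.S]) ∩ Uo k s t (W ++ [Lt.T]) = ∅ ∧
    Uo k s t (W ++ [Lt.S]) ∩
      C2o (g k s t W).1 (vSK k s t W + vTK k s t W) = ∅ ∧
    Uo k s t (W ++ [Lt.T]) ∩
      C2o (g k s t W).1 (vSK k s t W + vTK k s t W) = ∅ ∧
    C3 (g k s t W).1 (g k s t W).2.1 (g k s t W).2.2 ∪ Uo k s t (W ++ [Lt.S]) ∪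
      Uo k s t (W ++ [Lt.T]) ∪
      C2o (g k s t W).1 (vSK k s t W + vTK k s t W) = Uset k s t W := by
  have htr := trunkB_reverse_false hW
  have hS := g_appS k s t W
  have hT := g_appT k s t W htr
  have hUoS : Uo k s t (W ++ [Lt.S]) = C4o (g k s t W).1 (g k s t W).2.2
      ((g k s t W).1 - (g k s t W).2.1)
      ((g k s t W).1 + (g k s t W).1 - (g k s t W).2.1 - (g k s t W).2.2) := by
    have h1 : (g k s t (W ++ [Lt.S])).1 = 2 • (g k s t W).1 - (g k s t W).2.1 := by rw [hS]
    have h2 : (g k s t (W ++ [Lt.S])).2.1 = (g k s t W).1 := by rw [hS]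
    have h3 : (g k s t (W ++ [Lt.S])).2.2 = (g k s t W).2.2 := by rw [hS]
    rw [Uo, vSK, vTK, h1, h2, h3,
      show (2 • (g k s t W).1 - (g k s t W).2.1 - (g k s t W).1 : V3) =
        (g k s t W).1 - (g k s t W).2.1 from by module,
      show (2 • (g k s t W).1 - (g k s t W).2.1 - (g k s t W).2.2 : V3) =
        (g k s t W).1 + (g k s t W).1 - (g k s t W).2.1 - (g k s t W).2.2 from by module]
  have hUoT : Uo k s t (W ++ [Lt.T]) = C4o (g k s t W).1 (g k s t W).2.1
      ((g k s t W).1 - (g k s t W).2.2)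
      ((g k s t W).1 + (g k s t W).1 - (g k s t W).2.1 - (g k s t W).2.2) := by
    have h1 : (g k s t (W ++ [Lt.T])).1 = 2 • (g k s t W).1 - (g k s t W).2.2 := by rw [hT]
    have h2 : (g k s t (W ++ [Lt.T])).2.1 = (g k s t W).1 := by rw [hT]
    have h3 : (g k s t (W ++ [Lt.T])).2.2 = (g k s t W).2.1 := by rw [hT]
    rw [Uo, vSK, vTK, h1, h2, h3,
      show (2 • (g k s t W).1 - (g k s t W).2.2 - (g k s t W).1 : V3) =
        (g k s t W).1 - (g k s t W).2.2 from by module,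
      show (2 • (g k s t W).1 - (g k s t W).2.2 - (g k s t W).2.1 : V3) =
        (g k s t W).1 + (g k s t W).1 - (g k s t W).2.1 - (g k s t W).2.2 from by module]
  rw [hUoS, hUoT]
  exact key (g k s t W).1 (g k s t W).2.1 (g k s t W).2.2
    (gRev_indep k s t hks hkt hst W.reverse)

end Markov
end

section
/- Let σ₁ = (1,3,2), σ₂ = (2,1,3), σ₃ = (3,2,1) (the index data (k₀,s₀,t₀) of the three subtrees for the Markov quiver). Then: (i) the map (i, X) ↦ g_K^{σᵢ, X} from {1,2,3} × 𝓜 to ℝ³ is injective; (ii) for all i and X, g_K^{σᵢ,X} ∉ {ẽ₁, ẽ₂, ẽ₃}; and (iii) every vector of the form g_M^{σᵢ,X} with M ∈ {K,S,T} either equals some ẽⱼ (j ∈ {1,2,3}) or equals g_K^{σⱼ, Y} for some j ∈ {1,2,3} and Y ∈ 𝓜. Consequently, every such vector is expressed as ẽⱼ or g_K^{σⱼ,Y} in exactly one way. -/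
namespace Markov

/-! ### Auxiliary development for stmt_18 -/

abbrev P2 : Type := ℤ × ℤ
abbrev P3 : Type := P2 × P2 × P2

/-- Integer-pair model of the mutation step. -/
def pstepM (tr : Bool) (l : Lt) (v : P3) : P3 :=
  match l with
  | Lt.S => ((2*v.1.1 - v.2.1.1, 2*v.1.2 - v.2.1.2), v.1, v.2.2)
  | Lt.T =>
    if tr then ((2*v.2.1.1 - v.2.2.1, 2*v.2.1.2 - v.2.2.2), v.2.1, v.1)
    else ((2*v.1.1 - v.2.2.1, 2*v.1.2 - v.2.2.2), v.1, v.2.1)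

/-- Integer-pair model of the g-vector recursion (on reversed words). -/
def pst : Word → P3
  | [] => ((1,1),(1,0),(0,-1))
  | l :: R => pstepM (trunkB R) l (pst R)

/-- The affine embedding of a pair into `V3`. -/
noncomputable def emb (k s t : Fin 3) (p : P2) : V3 :=
  (p.1 : ℝ) • (e k - e t) + (p.2 : ℝ) • (e s - e k) + (e s + e t - e k)

lemma emb_comb (k s t : Fin 3) (p q : P2) :
    emb k s t (2*p.1 - q.1, 2*p.2 - q.2) = 2 • emb k s t p - emb k s t q := by
  simp only [emb]
  push_cast
  module

lemma bridge (k s t : Fin 3) : ∀ R : Word,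
    gRev k s t R =
      (emb k s t (pst R).1, emb k s t (pst R).2.1, emb k s t (pst R).2.2) := by
  intro R
  induction R with
  | nil =>
    simp only [pst, gRev]
    refine Prod.ext ?_ (Prod.ext ?_ ?_) <;>
      · simp only [emb, Prod.fst, Prod.snd]
        push_cast
        module
  | cons l R ih =>
    show gStep (trunkB R) l (gRev k s t R) = _
    rw [ih]
    cases l with
    | S =>
      show (2 • emb k s t (pst R).1 - emb k s t (pst R).2.1, _, _) = _
      rw [show pst (Lt.S :: R) = pstepM (trunkB R) Lt.S (pst R) from rfl]
      exact Prod.ext (emb_comb ..).symm rfl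
    | T =>
      rw [show pst (Lt.T :: R) = pstepM (trunkB R) Lt.T (pst R) from rfl]
      cases trunkB R
      · show (2 • emb k s t (pst R).1 - emb k s t (pst R).2.2, _, _) = _
        exact Prod.ext (emb_comb ..).symm rfl
      · show (2 • emb k s t (pst R).2.1 - emb k s t (pst R).2.2, _, _) = _
        exact Prod.ext (emb_comb ..).symm rfl
/-- Trunk-word state. -/
def u3 (n : ℤ) : P3 := ((1, n+1), (1, n), (0, -1))

/-- First-branch ("root") state. -/
def RootI (v : P3) : Prop := ∃ n : ℤ, 0 ≤ n ∧ v = ((2, 2*n+1), (1, n), (1, n+1))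

/-- Deep-branch ("type 2") state. -/
def T2I (v : P3) : Prop :=
  v.1.1 = v.2.1.1 + v.2.2.1 ∧ v.1.2 = v.2.1.2 + v.2.2.2 ∧
  1 ≤ v.2.2.1 ∧ v.2.2.1 < v.2.1.1 ∧ 0 ≤ v.2.2.2 ∧ v.2.2.2 ≤ v.2.1.2 ∧ 1 ≤ v.2.1.2 ∧
  (v.2.1.1 * v.2.2.2 - v.2.1.2 * v.2.2.1 = 1 ∨ v.2.1.1 * v.2.2.2 - v.2.1.2 * v.2.2.1 = -1)

def BI (v : P3) : Prop := RootI v ∨ T2I v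

def SI (v : P3) : Prop := (∃ n : ℤ, 0 ≤ n ∧ v = u3 n) ∨ BI v

lemma trunkB_cons_S (R : Word) : trunkB (Lt.S :: R) = trunkB R := rfl
lemma trunkB_cons_T (R : Word) : trunkB (Lt.T :: R) = false := rfl

lemma BI_stepS {v : P3} (h : BI v) (tr : Bool) : BI (pstepM tr Lt.S v) := by
  obtain ⟨⟨a, b⟩, ⟨c, d⟩, ⟨p, q⟩⟩ := v
  right
  rcases h with ⟨n, hn, hv⟩ | hv
  · simp only [Prod.mk.injEq] at hv
    obtain ⟨⟨rfl, rfl⟩, ⟨rfl, rfl⟩, rfl, rfl⟩ := hv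
    simp only [pstepM, T2I, Prod.fst, Prod.snd]
    refine ⟨by omega, by omega, by omega, by omega, by omega, by omega, by omega,
      Or.inl (by omega)⟩
  · simp only [T2I, Prod.fst, Prod.snd] at hv
    obtain ⟨h1, h2, h3, h4, h5, h6, h7, h8⟩ := hv
    simp only [pstepM, T2I, Prod.fst, Prod.snd]
    refine ⟨by omega, by omega, by omega, by omega, by omega, by omega, by omega, ?_⟩
    rcases h8 with h8 | h8
    · exact Or.inl (by linear_combination h8 + q * h1 - p * h2)
    · exact Or.inr (by linear_combination h8 + q * h1 - p * h2)

lemma BI_stepT {v : P3} (h : BI v) : BI (pstepM false Lt.T v) := by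
  obtain ⟨⟨a, b⟩, ⟨c, d⟩, ⟨p, q⟩⟩ := v
  right
  rcases h with ⟨n, hn, hv⟩ | hv
  · simp only [Prod.mk.injEq] at hv
    obtain ⟨⟨rfl, rfl⟩, ⟨rfl, rfl⟩, rfl, rfl⟩ := hv
    simp only [pstepM, T2I, Prod.fst, Prod.snd, if_neg Bool.false_ne_true]
    refine ⟨by omega, by omega, by omega, by omega, by omega, by omega, by omega,
      Or.inr (by omega)⟩
  · simp only [T2I, Prod.fst, Prod.snd] at hv
    obtain ⟨h1, h2, h3, h4, h5, h6, h7, h8⟩ := hv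
    simp only [pstepM, T2I, Prod.fst, Prod.snd, if_neg Bool.false_ne_true]
    refine ⟨by omega, by omega, by omega, by omega, by omega, by omega, by omega, ?_⟩
    rcases h8 with h8 | h8
    · exact Or.inr (by linear_combination -h8 + d * h1 - c * h2)
    · exact Or.inl (by linear_combination -h8 + d * h1 - c * h2)

lemma inv_spec (R : Word) :
    (trunkB R = true → pst R = u3 (R.length : ℤ)) ∧
    (trunkB R = false → BI (pst R)) := by
  induction R with
  | nil =>
    refine ⟨fun _ => ?_, fun h => by simp [trunkB] at h⟩
    simp [pst, u3]
  | cons l R ih =>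
    cases l with
    | S =>
      rw [trunkB_cons_S]
      constructor
      · intro htr
        rw [show pst (Lt.S :: R) = pstepM (trunkB R) Lt.S (pst R) from rfl, htr, ih.1 htr]
        simp only [pstepM, u3, Prod.fst, Prod.snd, List.length_cons, Prod.mk.injEq]
        push_cast
        simp only [true_and, and_true]
        omega
      · intro htr
        rw [show pst (Lt.S :: R) = pstepM (trunkB R) Lt.S (pst R) from rfl]
        exact BI_stepS (ih.2 htr) _
    | T =>
      rw [trunkB_cons_T]
      refine ⟨fun h => by simp at h, fun _ => ?_⟩
      rw [show pst (Lt.T :: R) = pstepM (trunkB R) Lt.T (pst R) from rfl]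
      cases htr : trunkB R
      · exact BI_stepT (ih.2 htr)
      · rw [ih.1 htr]
        refine Or.inl ⟨(R.length : ℤ), Int.ofNat_nonneg _, ?_⟩
        simp only [pstepM, u3, if_true, Prod.fst, Prod.snd, Prod.mk.injEq, true_and, and_true]
        omega

lemma SI_pst (R : Word) : SI (pst R) := by
  cases htr : trunkB R
  · exact Or.inr ((inv_spec R).2 htr)
  · exact Or.inl ⟨(R.length : ℤ), Int.ofNat_nonneg _, (inv_spec R).1 htr⟩

lemma SI_K1_pos {v : P3} (h : SI v) : 1 ≤ v.1.1 := by
  obtain ⟨⟨a, b⟩, ⟨c, d⟩, ⟨p, q⟩⟩ := v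
  rcases h with ⟨n, hn, hv⟩ | ⟨n, hn, hv⟩ | hv <;>
    simp only [u3, T2I, Prod.mk.injEq, Prod.fst, Prod.snd] at hv ⊢ <;> omega

lemma SI_K2_pos {v : P3} (h : SI v) : 1 ≤ v.1.2 := by
  obtain ⟨⟨a, b⟩, ⟨c, d⟩, ⟨p, q⟩⟩ := v
  rcases h with ⟨n, hn, hv⟩ | ⟨n, hn, hv⟩ | hv <;>
    simp only [u3, T2I, Prod.mk.injEq, Prod.fst, Prod.snd] at hv ⊢ <;> omega

lemma SI_S1_pos {v : P3} (h : SI v) : 1 ≤ v.2.1.1 := by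
  obtain ⟨⟨a, b⟩, ⟨c, d⟩, ⟨p, q⟩⟩ := v
  rcases h with ⟨n, hn, hv⟩ | ⟨n, hn, hv⟩ | hv <;>
    simp only [u3, T2I, Prod.mk.injEq, Prod.fst, Prod.snd] at hv ⊢ <;> omega

lemma SI_S2_nonneg {v : P3} (h : SI v) : 0 ≤ v.2.1.2 := by
  obtain ⟨⟨a, b⟩, ⟨c, d⟩, ⟨p, q⟩⟩ := v
  rcases h with ⟨n, hn, hv⟩ | ⟨n, hn, hv⟩ | hv <;>
    simp only [u3, T2I, Prod.mk.injEq, Prod.fst, Prod.snd] at hv ⊢ <;> omega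

lemma BI_K1_ge {v : P3} (h : BI v) : 2 ≤ v.1.1 := by
  obtain ⟨⟨a, b⟩, ⟨c, d⟩, ⟨p, q⟩⟩ := v
  rcases h with ⟨n, hn, hv⟩ | hv <;>
    simp only [u3, T2I, Prod.mk.injEq, Prod.fst, Prod.snd] at hv ⊢ <;> omega

lemma no_swap {K S T : P2} (h1 : SI (K, S, T)) (h2 : BI (K, T, S)) : False := by
  obtain ⟨a, b⟩ := K; obtain ⟨c, d⟩ := S; obtain ⟨p, q⟩ := T
  rcases h1 with ⟨n, hn, h1⟩ | ⟨n, hn, h1⟩ | h1 <;>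
  rcases h2 with ⟨m, hm, h2⟩ | h2 <;>
    simp only [u3, T2I, Prod.mk.injEq, Prod.fst, Prod.snd] at h1 h2 <;> omega
lemma dvd_small {a d : ℤ} (h : a ∣ d) (h2 : |d| < a) : d = 0 := by
  obtain ⟨k, rfl⟩ := h
  have ha : 0 < a := (abs_nonneg _).trans_lt h2
  rw [abs_mul, abs_of_pos ha] at h2
  have hk : |k| < 1 := lt_of_mul_lt_mul_left (by simpa using h2) ha.le
  have hk' : k = 0 := by
    rcases abs_lt.mp hk with ⟨u1, u2⟩; omega
  simp [hk']

lemma t2_unique {v w : P3} (hv : T2I v) (hw : T2I w) (h : v.1 = w.1) : v = w := by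
  obtain ⟨⟨a, b⟩, ⟨c, d⟩, ⟨p, q⟩⟩ := v
  obtain ⟨⟨a', b'⟩, ⟨c', d'⟩, ⟨p', q'⟩⟩ := w
  simp only [T2I, Prod.fst, Prod.snd] at hv hw
  obtain ⟨h1, h2, h3, h4, h5, h6, h7, h8⟩ := hv
  obtain ⟨h1', h2', h3', h4', h5', h6', h7', h8'⟩ := hw
  simp only [Prod.mk.injEq] at h
  obtain ⟨ha, hb⟩ := h
  subst ha hb
  have h2p : 2 * p < a := by omega
  have h2p' : 2 * p' < a := by omega
  have ha3 : 3 ≤ a := by omega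
  have key : ∀ m : ℤ, a * m = p' - p ∨ a * m = p' + p → p = p' := by
    intro m hm
    rcases hm with hm | hm
    · have : p' - p = 0 := dvd_small ⟨m, hm.symm⟩ (abs_lt.mpr ⟨by omega, by omega⟩)
      omega
    · exfalso
      have : p' + p = 0 := dvd_small ⟨m, hm.symm⟩ (abs_lt.mpr ⟨by omega, by omega⟩)
      omega
  have hA1 : ∀ e : ℤ, c * q - d * p = e → a * q - b * p = e := by
    intro e he; linear_combination q * h1 - p * h2 + he
  have hB1 : ∀ e : ℤ, c' * q' - d' * p' = e → a * q' - b * p' = e := by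
    intro e he; linear_combination q' * h1' - p' * h2'  + he
  have hpp : p = p' := by
    rcases h8 with h8 | h8 <;> rcases h8' with h8' | h8'
    · exact key (p' * q - p * q')
        (Or.inl (by linear_combination p' * hA1 1 h8 - p * hB1 1 h8'))
    · exact key (p' * q - p * q')
        (Or.inr (by linear_combination p' * hA1 1 h8 - p * hB1 (-1) h8'))
    · exact key (p * q' - p' * q)
        (Or.inr (by linear_combination p * hB1 1 h8' - p' * hA1 (-1) h8))
    · exact key (p * q' - p' * q)
        (Or.inl (by linear_combination p * hB1 (-1) h8' - p' * hA1 (-1) h8))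
  subst hpp
  have hne : a ≠ 0 := by omega
  have hqq : q = q' := by
    rcases h8 with h8 | h8 <;> rcases h8' with h8' | h8'
    · refine mul_left_cancel₀ hne ?_
      have u1 := hA1 1 h8; have u2 := hB1 1 h8'; linarith
    · exfalso
      have u1 := hA1 1 h8; have u2 := hB1 (-1) h8'
      have hq2 : a * (q - q') = 2 := by linear_combination u1 - u2
      have := dvd_small ⟨q - q', hq2.symm⟩ (abs_lt.mpr ⟨by omega, by omega⟩)
      omega
    · exfalso
      have u1 := hA1 (-1) h8; have u2 := hB1 1 h8'
      have hq2 : a * (q - q') = -2 := by linear_combination u1 - u2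
      have := dvd_small ⟨q - q', hq2.symm⟩ (abs_lt.mpr ⟨by omega, by omega⟩)
      omega
    · refine mul_left_cancel₀ hne ?_
      have u1 := hA1 (-1) h8; have u2 := hB1 (-1) h8'; linarith
  subst hqq
  have hc : c = c' := by omega
  have hd : d = d' := by omega
  subst hc hd
  rfl

lemma kdet {v w : P3} (hv : SI v) (hw : SI w) (h : v.1 = w.1) : v = w := by
  rcases hv with ⟨n, hn, rfl⟩ | ⟨n, hn, rfl⟩ | hv <;>
    rcases hw with ⟨m, hm, rfl⟩ | ⟨m, hm, rfl⟩ | hw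
  · simp only [u3, Prod.fst, Prod.snd, Prod.mk.injEq] at h
    obtain ⟨-, h2⟩ := h
    have hnm : n = m := by omega
    subst hnm; rfl
  · simp only [u3, Prod.fst, Prod.snd, Prod.mk.injEq] at h; exact absurd h.1 (by norm_num)
  · exfalso
    obtain ⟨⟨a, b⟩, ⟨c, d⟩, ⟨p, q⟩⟩ := w
    simp only [u3, T2I, Prod.mk.injEq, Prod.fst, Prod.snd] at h hw
    omega
  · simp only [u3, Prod.fst, Prod.snd, Prod.mk.injEq] at h; exact absurd h.1 (by norm_num)
  · simp only [Prod.fst, Prod.snd, Prod.mk.injEq] at h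
    obtain ⟨-, h2⟩ := h
    have hnm : n = m := by omega
    subst hnm; rfl
  · exfalso
    obtain ⟨⟨a, b⟩, ⟨c, d⟩, ⟨p, q⟩⟩ := w
    simp only [T2I, Prod.mk.injEq, Prod.fst, Prod.snd] at h hw
    omega
  · exfalso
    obtain ⟨⟨a, b⟩, ⟨c, d⟩, ⟨p, q⟩⟩ := v
    simp only [u3, T2I, Prod.mk.injEq, Prod.fst, Prod.snd] at h hv
    omega
  · exfalso
    obtain ⟨⟨a, b⟩, ⟨c, d⟩, ⟨p, q⟩⟩ := v
    simp only [T2I, Prod.mk.injEq, Prod.fst, Prod.snd] at h hv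
    omega
  · exact t2_unique hv hw h
lemma trunkB_eq_replicate {R : Word} (h : trunkB R = true) : R = List.replicate R.length Lt.S := by
  induction R with
  | nil => rfl
  | cons l R ih =>
    have h' : l = Lt.S ∧ trunkB R = true := by
      cases l
      · exact ⟨rfl, h⟩
      · exact absurd h (by simp [trunkB_cons_T])
    obtain ⟨rfl, h2⟩ := h'
    simp only [List.length_cons, List.replicate_succ, List.cons.injEq]
    exact ⟨trivial, ih h2⟩

lemma pst_inj : ∀ R1 R2 : Word, pst R1 = pst R2 → R1 = R2 := by
  intro R1
  induction R1 with
  | nil =>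
    intro R2 h
    cases R2 with
    | nil => rfl
    | cons l R =>
      exfalso
      have hsi := SI_pst R
      rcases hR : pst R with ⟨⟨a,b⟩,⟨c,d⟩,⟨p,q⟩⟩
      rw [hR] at hsi
      have hK1 := SI_K1_pos hsi
      have hK2 := SI_K2_pos hsi
      have hS1 := SI_S1_pos hsi
      simp only [Prod.fst, Prod.snd] at hK1 hK2 hS1
      rw [show pst (l :: R) = pstepM (trunkB R) l (pst R) from rfl, hR] at h
      replace h := h.symm
      cases l with
      | S =>
        simp only [pst, pstepM, Prod.mk.injEq, Prod.fst, Prod.snd] at h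
        obtain ⟨⟨e1, e2⟩, ⟨e3, e4⟩, e5, e6⟩ := h
        omega
      | T =>
        cases htr : trunkB R <;> rw [htr] at h <;>
          simp only [pst, pstepM, if_true, if_neg Bool.false_ne_true,
            Prod.mk.injEq, Prod.fst, Prod.snd] at h <;>
          obtain ⟨⟨e1, e2⟩, ⟨e3, e4⟩, e5, e6⟩ := h <;> omega
  | cons l1 R1 ih =>
    intro R2 h
    cases R2 with
    | nil =>
      exfalso
      have hsi := SI_pst R1
      rcases hR : pst R1 with ⟨⟨a,b⟩,⟨c,d⟩,⟨p,q⟩⟩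
      rw [hR] at hsi
      have hK1 := SI_K1_pos hsi
      have hK2 := SI_K2_pos hsi
      have hS1 := SI_S1_pos hsi
      simp only [Prod.fst, Prod.snd] at hK1 hK2 hS1
      rw [show pst (l1 :: R1) = pstepM (trunkB R1) l1 (pst R1) from rfl, hR] at h
      cases l1 with
      | S =>
        simp only [pst, pstepM, Prod.mk.injEq, Prod.fst, Prod.snd] at h
        obtain ⟨⟨e1, e2⟩, ⟨e3, e4⟩, e5, e6⟩ := h
        omega
      | T =>
        cases htr : trunkB R1 <;> rw [htr] at h <;>
          simp only [pst, pstepM, if_true, if_neg Bool.false_ne_true,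
            Prod.mk.injEq, Prod.fst, Prod.snd] at h <;>
          obtain ⟨⟨e1, e2⟩, ⟨e3, e4⟩, e5, e6⟩ := h <;> omega
    | cons l2 R2 =>
      have hsi1 := SI_pst R1
      have hsi2 := SI_pst R2
      rcases hv1 : pst R1 with ⟨⟨a,b⟩,⟨c,d⟩,⟨p,q⟩⟩
      rcases hv2 : pst R2 with ⟨⟨a',b'⟩,⟨c',d'⟩,⟨p',q'⟩⟩
      rw [hv1] at hsi1
      rw [hv2] at hsi2
      rw [show pst (l1 :: R1) = pstepM (trunkB R1) l1 (pst R1) from rfl, hv1,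
          show pst (l2 :: R2) = pstepM (trunkB R2) l2 (pst R2) from rfl, hv2] at h
      cases l1 <;> cases l2
      · -- S S
        simp only [pstepM, Prod.mk.injEq, Prod.fst, Prod.snd] at h
        obtain ⟨⟨e1, e2⟩, ⟨e3, e4⟩, e5, e6⟩ := h
        have : R1 = R2 := by
          refine ih R2 ?_
          rw [hv1, hv2]
          simp only [Prod.mk.injEq]
          refine ⟨⟨by omega, by omega⟩, ⟨by omega, by omega⟩, by omega, by omega⟩
        rw [this]
      · -- S T
        exfalso
        cases htr2 : trunkB R2 <;> rw [htr2] at h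
        · -- R2 branch
          have hb2 := (inv_spec R2).2 htr2
          rw [hv2] at hb2
          simp only [pstepM, if_neg Bool.false_ne_true, Prod.mk.injEq,
            Prod.fst, Prod.snd] at h
          obtain ⟨⟨e1, e2⟩, ⟨e3, e4⟩, e5, e6⟩ := h
          have h1 : a' = a := by omega
          have h2 : b' = b := by omega
          have h3 : c' = p := by omega
          have h4 : d' = q := by omega
          have h5 : p' = c := by omega
          have h6 : q' = d := by omega
          subst h1 h2 h3 h4 h5 h6
          exact no_swap hsi1 hb2
        · -- R2 trunk
          have hlen2 := (inv_spec R2).1 htr2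
          rw [hv2] at hlen2
          simp only [u3, Prod.mk.injEq] at hlen2
          obtain ⟨⟨f1, f2⟩, ⟨f3, f4⟩, f5, f6⟩ := hlen2
          simp only [pstepM, if_true, Prod.mk.injEq, Prod.fst, Prod.snd] at h
          obtain ⟨⟨e1, e2⟩, ⟨e3, e4⟩, e5, e6⟩ := h
          have hS1 := SI_S1_pos hsi1
          simp only [Prod.fst, Prod.snd] at hS1
          omega
      · -- T S
        exfalso
        cases htr1 : trunkB R1 <;> rw [htr1] at h
        · -- R1 branch
          have hb1 := (inv_spec R1).2 htr1
          rw [hv1] at hb1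
          simp only [pstepM, if_neg Bool.false_ne_true, Prod.mk.injEq,
            Prod.fst, Prod.snd] at h
          obtain ⟨⟨e1, e2⟩, ⟨e3, e4⟩, e5, e6⟩ := h
          have h1 : a = a' := by omega
          have h2 : b = b' := by omega
          have h3 : c = p' := by omega
          have h4 : d = q' := by omega
          have h5 : p = c' := by omega
          have h6 : q = d' := by omega
          subst h1 h2 h3 h4 h5 h6
          exact no_swap hsi2 hb1
        · -- R1 trunk
          have hlen1 := (inv_spec R1).1 htr1
          rw [hv1] at hlen1
          simp only [u3, Prod.mk.injEq] at hlen1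
          obtain ⟨⟨f1, f2⟩, ⟨f3, f4⟩, f5, f6⟩ := hlen1
          simp only [pstepM, if_true, Prod.mk.injEq, Prod.fst, Prod.snd] at h
          obtain ⟨⟨e1, e2⟩, ⟨e3, e4⟩, e5, e6⟩ := h
          have hS2 := SI_S1_pos hsi2
          simp only [Prod.fst, Prod.snd] at hS2
          omega
      · -- T T
        cases htr1 : trunkB R1 <;> cases htr2 : trunkB R2 <;> rw [htr1, htr2] at h
        · -- both branch
          simp only [pstepM, if_neg Bool.false_ne_true, Prod.mk.injEq,
            Prod.fst, Prod.snd] at h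
          obtain ⟨⟨e1, e2⟩, ⟨e3, e4⟩, e5, e6⟩ := h
          have : R1 = R2 := by
            refine ih R2 ?_
            rw [hv1, hv2]
            simp only [Prod.mk.injEq]
            refine ⟨⟨by omega, by omega⟩, ⟨by omega, by omega⟩, by omega, by omega⟩
          rw [this]
        · -- R1 branch, R2 trunk
          exfalso
          have hb1 := (inv_spec R1).2 htr1
          rw [hv1] at hb1
          have hlen2 := (inv_spec R2).1 htr2
          rw [hv2] at hlen2
          simp only [u3, Prod.mk.injEq] at hlen2
          obtain ⟨⟨f1, f2⟩, ⟨f3, f4⟩, f5, f6⟩ := hlen2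
          simp only [pstepM, if_true, if_neg Bool.false_ne_true, Prod.mk.injEq,
            Prod.fst, Prod.snd] at h
          obtain ⟨⟨e1, e2⟩, ⟨e3, e4⟩, e5, e6⟩ := h
          have hK := BI_K1_ge hb1
          simp only [Prod.fst, Prod.snd] at hK
          omega
        · -- R1 trunk, R2 branch
          exfalso
          have hb2 := (inv_spec R2).2 htr2
          rw [hv2] at hb2
          have hlen1 := (inv_spec R1).1 htr1
          rw [hv1] at hlen1
          simp only [u3, Prod.mk.injEq] at hlen1
          obtain ⟨⟨f1, f2⟩, ⟨f3, f4⟩, f5, f6⟩ := hlen1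
          simp only [pstepM, if_true, if_neg Bool.false_ne_true, Prod.mk.injEq,
            Prod.fst, Prod.snd] at h
          obtain ⟨⟨e1, e2⟩, ⟨e3, e4⟩, e5, e6⟩ := h
          have hK := BI_K1_ge hb2
          simp only [Prod.fst, Prod.snd] at hK
          omega
        · -- both trunk
          have hlen1 := (inv_spec R1).1 htr1
          rw [hv1] at hlen1
          have hlen2 := (inv_spec R2).1 htr2
          rw [hv2] at hlen2
          simp only [u3, Prod.mk.injEq] at hlen1 hlen2
          obtain ⟨⟨f1, f2⟩, ⟨f3, f4⟩, f5, f6⟩ := hlen1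
          obtain ⟨⟨g1, g2⟩, ⟨g3, g4⟩, g5, g6⟩ := hlen2
          simp only [pstepM, if_true, Prod.mk.injEq, Prod.fst, Prod.snd] at h
          obtain ⟨⟨e1, e2⟩, ⟨e3, e4⟩, e5, e6⟩ := h
          have hlen : R1.length = R2.length := by omega
          have : R1 = R2 := by
            rw [trunkB_eq_replicate htr1, trunkB_eq_replicate htr2, hlen]
          rw [this]
lemma e_apply (i m : Fin 3) : e i m = if m = i then 1 else 0 := by
  simp [e, Pi.single_apply]

lemma emb_at_s {k s t : Fin 3} (hsk : s ≠ k) (hst : s ≠ t) (p : P2) :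
    emb k s t p s = (p.2 : ℝ) + 1 := by
  simp only [emb, Pi.add_apply, Pi.sub_apply, Pi.smul_apply, e_apply,
    eq_self_iff_true, if_true, if_pos rfl, if_neg hsk, if_neg hst, smul_eq_mul]
  ring

lemma emb_at_t {k s t : Fin 3} (htk : t ≠ k) (hts : t ≠ s) (p : P2) :
    emb k s t p t = 1 - (p.1 : ℝ) := by
  simp only [emb, Pi.add_apply, Pi.sub_apply, Pi.smul_apply, e_apply,
    eq_self_iff_true, if_true, if_pos rfl, if_neg htk, if_neg hts, smul_eq_mul]
  ring

lemma emb_cross {k s t k' s' : Fin 3} {p q : P2}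
    (hp : 1 ≤ p.2) (hq : 1 ≤ q.1)
    (hsk : s ≠ k) (hst : s ≠ t) (hsk' : s ≠ k') (hss' : s ≠ s')
    (h : emb k s t p = emb k' s' s q) : False := by
  have h1 := congrFun h s
  rw [emb_at_s hsk hst, emb_at_t hsk' hss'] at h1
  have hp' : (1 : ℝ) ≤ (p.2 : ℝ) := by exact_mod_cast hp
  have hq' : (1 : ℝ) ≤ (q.1 : ℝ) := by exact_mod_cast hq
  linarith

lemma emb_inj_same {k s t : Fin 3} {p q : P2}
    (hsk : s ≠ k) (hst : s ≠ t) (htk : t ≠ k)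
    (h : emb k s t p = emb k s t q) : p = q := by
  have h1 := congrFun h s
  rw [emb_at_s hsk hst, emb_at_s hsk hst] at h1
  have h2 := congrFun h t
  rw [emb_at_t htk (Ne.symm hst), emb_at_t htk (Ne.symm hst)] at h2
  have e2 : p.2 = q.2 := by exact_mod_cast (by linarith : (p.2:ℝ) = q.2)
  have e1 : p.1 = q.1 := by exact_mod_cast (by linarith : (p.1:ℝ) = q.1)
  exact Prod.ext e1 e2

lemma emb_ne_e {k s t : Fin 3} {p : P2} (hp : 1 ≤ p.2)
    (hsk : s ≠ k) (hst : s ≠ t) (j : Fin 3) (h : emb k s t p = e j) : False := by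
  have h1 := congrFun h s
  rw [emb_at_s hsk hst, e_apply] at h1
  have hp' : (1 : ℝ) ≤ (p.2 : ℝ) := by exact_mod_cast hp
  split_ifs at h1 <;> linarith

lemma gM_fst (i : Fin 3) (X : Word) :
    (gM i X).1 = emb (sig i).1 (sig i).2.1 (sig i).2.2 (pst X.reverse).1 := by
  rw [gM, g, bridge]

lemma words_eq {X Y : Word} (h : (pst X.reverse).1 = (pst Y.reverse).1) : X = Y := by
  have h2 := pst_inj X.reverse Y.reverse (kdet (SI_pst _) (SI_pst _) h)
  have h3 := congrArg List.reverse h2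
  simpa using h3

lemma sig0 : sig 0 = ((0 : Fin 3), (2 : Fin 3), (1 : Fin 3)) := rfl
lemma sig1 : sig 1 = ((1 : Fin 3), (0 : Fin 3), (2 : Fin 3)) := rfl
lemma sig2 : sig 2 = ((2 : Fin 3), (1 : Fin 3), (0 : Fin 3)) := rfl

lemma gST_good (k s t : Fin 3) : ∀ R : Word,
    ((gRev k s t R).2.1 = e s ∨ (gRev k s t R).2.1 = e t ∨
      ∃ R', (gRev k s t R).2.1 = (gRev k s t R').1) ∧
    ((gRev k s t R).2.2 = e s ∨ (gRev k s t R).2.2 = e t ∨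
      ∃ R', (gRev k s t R).2.2 = (gRev k s t R').1) := by
  intro R
  induction R with
  | nil => exact ⟨Or.inl rfl, Or.inr (Or.inl rfl)⟩
  | cons l R ih =>
    obtain ⟨hS, hT⟩ := ih
    cases l with
    | S => exact ⟨Or.inr (Or.inr ⟨R, rfl⟩), hT⟩
    | T =>
      rw [show gRev k s t (Lt.T :: R) = gStep (trunkB R) Lt.T (gRev k s t R) from rfl]
      cases htr : trunkB R
      · exact ⟨Or.inr (Or.inr ⟨R, rfl⟩), hS⟩
      · exact ⟨hS, Or.inr (Or.inr ⟨R, rfl⟩)⟩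
lemma main_inj (i j : Fin 3) (p q : P2)
    (hp1 : 1 ≤ p.1) (hp2 : 1 ≤ p.2) (hq1 : 1 ≤ q.1) (hq2 : 1 ≤ q.2)
    (h : emb (sig i).1 (sig i).2.1 (sig i).2.2 p =
      emb (sig j).1 (sig j).2.1 (sig j).2.2 q) : i = j ∧ p = q := by
  fin_cases i <;> fin_cases j
  · exact ⟨rfl, emb_inj_same (by decide) (by decide) (by decide) h⟩
  · exact ((emb_cross hp2 hq1 (by decide) (by decide) (by decide) (by decide) h).elim)
  · exact ((emb_cross hq2 hp1 (by decide) (by decide) (by decide) (by decide) h.symm).elim)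
  · exact ((emb_cross hq2 hp1 (by decide) (by decide) (by decide) (by decide) h.symm).elim)
  · exact ⟨rfl, emb_inj_same (by decide) (by decide) (by decide) h⟩
  · exact ((emb_cross hp2 hq1 (by decide) (by decide) (by decide) (by decide) h).elim)
  · exact ((emb_cross hp2 hq1 (by decide) (by decide) (by decide) (by decide) h).elim)
  · exact ((emb_cross hq2 hp1 (by decide) (by decide) (by decide) (by decide) h.symm).elim)
  · exact ⟨rfl, emb_inj_same (by decide) (by decide) (by decide) h⟩

/-- unique representatives of the modified g-vectors. -/
theorem stmt_18 :
    (∀ (i j : Fin 3) (X Y : Word), (gM i X).1 = (gM j Y).1 → i = j ∧ X = Y) ∧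
    (∀ (i : Fin 3) (X : Word) (j : Fin 3), (gM i X).1 ≠ e j) ∧
    (∀ (i : Fin 3) (X : Word),
      ((∃ j : Fin 3, (gM i X).1 = e j) ∨
        ∃ (j : Fin 3) (Y : Word), (gM i X).1 = (gM j Y).1) ∧
      ((∃ j : Fin 3, (gM i X).2.1 = e j) ∨
        ∃ (j : Fin 3) (Y : Word), (gM i X).2.1 = (gM j Y).1) ∧
      ((∃ j : Fin 3, (gM i X).2.2 = e j) ∨
        ∃ (j : Fin 3) (Y : Word), (gM i X).2.2 = (gM j Y).1)) := by
  refine ⟨?_, ?_, ?_⟩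
  · intro i j X Y h
    rw [gM_fst, gM_fst] at h
    obtain ⟨hij, hpq⟩ := main_inj i j _ _
      (SI_K1_pos (SI_pst X.reverse)) (SI_K2_pos (SI_pst X.reverse))
      (SI_K1_pos (SI_pst Y.reverse)) (SI_K2_pos (SI_pst Y.reverse)) h
    exact ⟨hij, words_eq hpq⟩
  · intro i X j h
    rw [gM_fst] at h
    have h2 := SI_K2_pos (SI_pst X.reverse)
    fin_cases i <;> exact emb_ne_e h2 (by decide) (by decide) j h
  · intro i X
    have hgm : gM i X = gRev (sig i).1 (sig i).2.1 (sig i).2.2 X.reverse := rfl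
    have hgood := gST_good (sig i).1 (sig i).2.1 (sig i).2.2 X.reverse
    have conv : ∀ R' : Word,
        (gM i R'.reverse).1 = (gRev (sig i).1 (sig i).2.1 (sig i).2.2 R').1 := by
      intro R'
      rw [gM, g, List.reverse_reverse]
    refine ⟨Or.inr ⟨i, X, rfl⟩, ?_, ?_⟩
    · rcases hgood.1 with h | h | ⟨R', h⟩
      · exact Or.inl ⟨(sig i).2.1, by rw [hgm]; exact h⟩
      · exact Or.inl ⟨(sig i).2.2, by rw [hgm]; exact h⟩
      · exact Or.inr ⟨i, R'.reverse, by rw [hgm, conv R']; exact h⟩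
    · rcases hgood.2 with h | h | ⟨R', h⟩
      · exact Or.inl ⟨(sig i).2.1, by rw [hgm]; exact h⟩
      · exact Or.inl ⟨(sig i).2.2, by rw [hgm]; exact h⟩
      · exact Or.inr ⟨i, R'.reverse, by rw [hgm, conv R']; exact h⟩


end Markov
end
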